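/- Let J be a linear generalized complex structure on W with classical tensors (A, π, σ), and V ⊆ W a subspace satisfying V ∩ π♯(ann V) = 0 and A(V) ⊆ V + im π♯. Then V + im π♯ = V ⊕ π♯(ann V). -/

import Mathlib

/-!
Skewness of `π♯` gives `ker π♯ = ann (im π♯)`, so by rank–nullity on `ann V`,
`dim π♯(ann V) = dim ann V - dim ann (V + im π♯) = dim (V + im π♯) - dim V`.
When `V ∩ π♯(ann V) = 0`, the subspace `V ⊕ π♯(ann V) ⊆ V + im π♯` therefore has full
dimension, and the inclusion is an equality.
-/

open Module

theorem Submodule.finrank_map_add_finrank_inf_ker {K M N : Type*} [DivisionRing K]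
    [AddCommGroup M] [Module K M] [AddCommGroup N] [Module K N]
    (f : M →ₗ[K] N) (p : Submodule K M) [FiniteDimensional K p] :
    finrank K (p.map f) + finrank K (p ⊓ LinearMap.ker f : Submodule K M) = finrank K p := by
  rw [← LinearMap.range_domRestrict, ← (f.domRestrict p).finrank_range_add_finrank_ker,
    LinearMap.ker_domRestrict, ← Submodule.map_comap_subtype, finrank_map_subtype_eq]

section Skew

variable {K W : Type*} [Field K] [AddCommGroup W] [Module K W]

theorem LinearMap.ker_eq_dualAnnihilator_range_of_skew (π : Dual K W →ₗ[K] W)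
    (hπ : ∀ α β : Dual K W, α (π β) = -β (π α)) :
    LinearMap.ker π = (LinearMap.range π).dualAnnihilator := by
  ext α
  rw [LinearMap.mem_ker, Submodule.mem_dualAnnihilator, ← Module.forall_dual_apply_eq_zero_iff K]
  refine ⟨fun h _ ⟨β, hβ⟩ => hβ ▸ ?_, fun h β => ?_⟩
  · rw [hπ, h, neg_eq_zero]
  · rw [hπ, h _ ⟨β, rfl⟩, neg_zero]

theorem finrank_map_dualAnnihilator_add_finrank_of_skew [FiniteDimensional K W]
    (π : Dual K W →ₗ[K] W) (hπ : ∀ α β : Dual K W, α (π β) = -β (π α)) (V : Submodule K W) :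
    finrank K (V.dualAnnihilator.map π) + finrank K V =
      finrank K (V ⊔ LinearMap.range π : Submodule K W) := by
  have hker : V.dualAnnihilator ⊓ LinearMap.ker π = (V ⊔ LinearMap.range π).dualAnnihilator := by
    rw [π.ker_eq_dualAnnihilator_range_of_skew hπ, Submodule.dualAnnihilator_sup_eq]
  have hmap := V.dualAnnihilator.finrank_map_add_finrank_inf_ker π
  have hV := Subspace.finrank_add_finrank_dualAnnihilator_eq V
  have hVU := Subspace.finrank_add_finrank_dualAnnihilator_eq (V ⊔ LinearMap.range π)
  rw [hker] at hmap
  omega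

end Skew

theorem sum_eq_direct_sum_with_annihilator
    (W : Type*) [AddCommGroup W] [Module ℝ W] [FiniteDimensional ℝ W]
    (piSh : Module.Dual ℝ W →ₗ[ℝ] W)
    (hpi : ∀ α β : Module.Dual ℝ W, α (piSh β) = - β (piSh α))
    (V : Submodule ℝ W)
    (hV1 : V ⊓ Submodule.map piSh V.dualAnnihilator = ⊥) :
    V ⊔ LinearMap.range piSh = V ⊔ Submodule.map piSh V.dualAnnihilator ∧
    V ⊓ Submodule.map piSh V.dualAnnihilator = ⊥ := by
  refine ⟨(Submodule.eq_of_le_of_finrank_le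
    (sup_le_sup_left LinearMap.map_le_range V) ?_).symm, hV1⟩
  have hsum := Submodule.finrank_sup_add_finrank_inf_eq V (V.dualAnnihilator.map piSh)
  have hdim := finrank_map_dualAnnihilator_add_finrank_of_skew piSh hpi V
  rw [hV1, finrank_bot] at hsum
  omega
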